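/- arXiv:math/0311278 — 2 statements merged into one kernel-verified Lean document; each statement's English description precedes it below -/
import Mathlib

section
/- Let V be a vector space over \mathbb{C} with basis u_0, u_1, ..., u_{n-1}. For 0 \leq \alpha \leq n-1 define the polynomial vector w_\alpha(z) = \sum_{j=\alpha}^{n-1} z^{n+\alpha-j-1} u_j \in V \otimes \mathbb{C}[z]. Then for any 0 \leq \alpha_1 < \alpha_2 < ... < \alpha_i \leq n-1, the wedge product w_{\alpha_1}(z) \wedge w_{\alpha_2}(z) \wedge ... \wedge w_{\alpha_i}(z) \in \Lambda^i V \otimes \mathbb{C}[z] is divisible by z^{n(i-1)+\alpha_1}; in particular it is divisible by z^{n(i-1)}. -/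
/-!
For `a ≤ b ≤ n` one has `z ^ (b - a) • w_a = w_b + z ^ n • s_b` with
`s_b = ∑_{a ≤ j < b} z ^ (b - j - 1) u_j`, and `w_a = z ^ a • v` for a polynomial vector `v`.
In `w_{α_1} ∧ w_{α_2} ∧ ⋯ ∧ w_{α_i}` the multiples of `w_{α_1}` in the later factors die against
the first one, so the product equals `z ^ α_1 v ∧ (-z ^ n s_{α_2}) ∧ ⋯ ∧ (-z ^ n s_{α_i})`, from
which `z ^ (n (i - 1) + α_1)` factors out.
-/

open Polynomial Finset

namespace ExteriorAlgebra

variable {R M : Type*} [CommRing R] [AddCommGroup M] [Module R M]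

theorem ι_mul_ι_smul_add (m x : M) (c : R) : ι R m * ι R (c • m + x) = ι R m * ι R x := by
  rw [map_add, map_smul, mul_add, mul_smul_comm, ι_sq_zero, smul_zero, zero_add]

theorem ι_mul_ι_anticomm (x y : M) : ι R x * ι R y = -(ι R y * ι R x) :=
  eq_neg_of_add_eq_zero_left (ι_add_mul_swap x y)

theorem ι_mul_prod_ofFn_ι_smul_add {k : ℕ} (m : M) (c : Fin k → R) (t : Fin k → M) :
    ι R m * (List.ofFn fun j => ι R (c j • m + t j)).prod =
      ι R m * (List.ofFn fun j => ι R (t j)).prod := by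
  induction k with
  | zero => rfl
  | succ k ih =>
    simp only [List.ofFn_succ, List.prod_cons]
    calc ι R m * (ι R (c 0 • m + t 0) * _)
        = -(ι R (t 0) *
            (ι R m * (List.ofFn fun j => ι R (c j.succ • m + t j.succ)).prod)) := by
          rw [← mul_assoc, ι_mul_ι_smul_add, ι_mul_ι_anticomm, neg_mul, mul_assoc]
      _ = ι R m * (ι R (t 0) * _) := by
          rw [ih, ← mul_assoc, ← mul_assoc, ι_mul_ι_anticomm (t 0), neg_mul, neg_neg]

theorem prod_ofFn_ι_smul {k : ℕ} (r : R) (t : Fin k → M) :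
    (List.ofFn fun j => ι R (r • t j)).prod =
      r ^ k • (List.ofFn fun j => ι R (t j)).prod := by
  simpa [ιMulti_apply] using (ιMulti R k).map_smul_univ (fun _ => r) t

end ExteriorAlgebra

section

variable {R M : Type*} [CommSemiring R] [AddCommMonoid M] [Module R M]

/-- The paper's `w_a(z)`, for an arbitrary family `e` in place of the basis `u`. -/
def wVec (z : R) (e : ℕ → M) (n a : ℕ) : M :=
  ∑ j ∈ Ico a n, z ^ (n + a - j - 1) • e j

theorem LinearMap.map_wVec {N : Type*} [AddCommMonoid N] [Module R N] (f : M →ₗ[R] N) (z : R)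
    (e : ℕ → M) (n a : ℕ) : f (wVec z e n a) = wVec z (f ∘ e) n a := by
  simp only [wVec, map_sum, map_smul, Function.comp_apply]

theorem wVec_eq_pow_smul (z : R) (e : ℕ → M) (n a : ℕ) :
    wVec z e n a = z ^ a • ∑ j ∈ Ico a n, z ^ (n - j - 1) • e j := by
  rw [wVec, smul_sum]
  refine sum_congr rfl fun j hj => ?_
  rw [smul_smul, ← pow_add]
  congr 2
  grind

theorem pow_smul_wVec {a b n : ℕ} (hab : a ≤ b) (hbn : b ≤ n) (z : R) (e : ℕ → M) :
    z ^ (b - a) • wVec z e n a =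
      wVec z e n b + z ^ n • ∑ j ∈ Ico a b, z ^ (b - j - 1) • e j := by
  rw [wVec, wVec, smul_sum, smul_sum, ← Ico_union_Ico_eq_Ico hab hbn,
    sum_union (Ico_disjoint_Ico_consecutive a b n), add_comm (∑ j ∈ Ico b n, _)]
  congr 1 <;> refine sum_congr rfl fun j hj => ?_ <;> simp only [smul_smul, ← pow_add] <;>
    congr 2 <;> grind

end

/-- Let `V` have basis `u_0, ..., u_{n-1}` and set
`w_α(z) = ∑_{j=α}^{n-1} z^{n+α-j-1} u_j ∈ V ⊗ ℂ[z]`.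
For `0 ≤ α_1 < α_2 < ... < α_i ≤ n-1`, the wedge product
`w_{α_1}(z) ∧ ... ∧ w_{α_i}(z) ∈ Λ^i V ⊗ ℂ[z]` is divisible by `z^{n(i-1)+α_1}`;
in particular it is divisible by `z^{n(i-1)}`.
We realize `V ⊗ ℂ[z]` as the free `ℂ[z]`-module `Fin n → ℂ[z]` with standard basis `u`,
and the wedge product as a product in the exterior algebra over `ℂ[z]`. -/
theorem wedge_divisibility (n i : ℕ) (hi : 0 < i) (α : Fin i → ℕ)
    (hmono : StrictMono α) (hlt : ∀ k, α k < n) :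
    let u : ℕ → ExteriorAlgebra (Polynomial ℂ) (Fin n → Polynomial ℂ) :=
      fun j => ExteriorAlgebra.ι (Polynomial ℂ)
        (if h : j < n then Pi.single (⟨j, h⟩ : Fin n) 1 else 0)
    let w : ℕ → ExteriorAlgebra (Polynomial ℂ) (Fin n → Polynomial ℂ) :=
      fun a => ∑ j ∈ Finset.Ico a n, (X : Polynomial ℂ) ^ (n + a - j - 1) • u j
    (∃ y, (List.ofFn fun k => w (α k)).prod =
        (X : Polynomial ℂ) ^ (n * (i - 1) + α ⟨0, hi⟩) • y) ∧
    (∃ y, (List.ofFn fun k => w (α k)).prod = (X : Polynomial ℂ) ^ (n * (i - 1)) • y) := by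
  intro u w
  obtain ⟨i, rfl⟩ : ∃ i', i = i' + 1 := ⟨i - 1, (Nat.succ_pred_eq_of_pos hi).symm⟩
  set z : ℂ[X] := X
  set e : ℕ → Fin n → ℂ[X] := fun j => if h : j < n then Pi.single ⟨j, h⟩ 1 else 0
  have hw (a : ℕ) : w a = ExteriorAlgebra.ι ℂ[X] (wVec z e n a) :=
    ((ExteriorAlgebra.ι ℂ[X]).map_wVec z e n a).symm
  set t : Fin i → Fin n → ℂ[X] := fun k =>
    -∑ j ∈ Ico (α 0) (α k.succ), z ^ (α k.succ - j - 1) • e j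
  have hsucc (k : Fin i) :
      wVec z e n (α k.succ) = z ^ (α k.succ - α 0) • wVec z e n (α 0) + z ^ n • t k := by
    rw [pow_smul_wVec (hmono.monotone (Fin.zero_le _)) (hlt _).le, smul_neg, add_neg_cancel_right]
  have hprod : (List.ofFn fun k => w (α k)).prod = z ^ (n * i + α 0) •
      (ExteriorAlgebra.ι ℂ[X] (∑ j ∈ Ico (α 0) n, z ^ (n - j - 1) • e j) *
        (List.ofFn fun k => ExteriorAlgebra.ι ℂ[X] (t k)).prod) := by
    simp only [List.ofFn_succ, List.prod_cons, hw, hsucc,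
      ExteriorAlgebra.ι_mul_prod_ofFn_ι_smul_add, ExteriorAlgebra.prod_ofFn_ι_smul]
    rw [wVec_eq_pow_smul, map_smul, smul_mul_smul_comm, ← pow_mul, ← pow_add, add_comm (α 0)]
  rw [Nat.add_sub_cancel]
  exact ⟨⟨_, hprod⟩, ⟨z ^ α 0 • _, by rw [hprod, pow_add, mul_smul]⟩⟩
end

section
/- Let n \geq 1 and let V = \mathbb{C}^2 \otimes (\mathbb{C}[t]/t^n) with basis v_0,...,v_{n-1}, u_0,...,u_{n-1} (v_i = v \otimes t^i, u_i = u \otimes t^i). Define operators e_j (0 \leq j \leq n-1) by e_j v_i = u_{i+j} (with u_m = 0 for m \geq n) and e_j u_i = 0, and let e^{(n)}(z) = e_{n-1} + z e_{n-2} + ... + z^{n-1} e_0, acting on \Lambda^n V by the Leibniz rule. Then for every i \geq 1, the series e^{(n)}(z)^i (v_0 \wedge ... \wedge v_{n-1}) \in \Lambda^n V \otimes \mathbb{C}[z] is divisible by z^{n(i-1)}. -/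
open Polynomial Finset

/-!
The operator `e(z)` sends `v_k` to `w_k = ∑_{a ≥ k} z^(n-1-a+k) u_a` and kills every `u_a`, hence
every `w_k`. By the Leibniz rule, `e(z)^i (v_0 ∧ ⋯ ∧ v_{n-1})` is therefore a combination of the
wedges in which the `v_k`, `k ∈ S`, are replaced by `w_k`, for sets `S` of size `i`. For `s < k`
we have `w_k ≡ z^(k-s) w_s` modulo `z^n V`; taking `s = min S`, the multiple of `w_s` contributes
nothing to the wedge, so every other slot of `S` yields a factor `z^n`.
-/

theorem AlternatingMap.exists_eq_pow_card_smul_of_eq_smul_add_smul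
    {R M N ι : Type*} [CommSemiring R] [AddCommMonoid M] [Module R M] [AddCommMonoid N]
    [Module R N] [DecidableEq ι] (f : M [⋀^ι]→ₗ[R] N) (a : R) {s : ι} {T : Finset ι}
    (hs : s ∉ T) {m : ι → M} (hm : ∀ k ∈ T, ∃ (c : R) (r : M), m k = c • m s + a • r) :
    ∃ y, f m = a ^ T.card • y := by
  induction T using Finset.induction_on generalizing m with
  | empty => exact ⟨f m, by simp⟩
  | @insert k T hk ih =>
    have hks : k ≠ s := fun h => hs (h ▸ mem_insert_self k T)
    obtain ⟨c, r, hmk⟩ := hm k (mem_insert_self k T)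
    obtain ⟨y, hy⟩ := ih (m := Function.update m k r) (fun h => hs (mem_insert_of_mem h))
      fun l hl => by
        have hlk : l ≠ k := fun h => hk (h ▸ hl)
        simpa [Function.update_of_ne hlk, Function.update_of_ne hks.symm] using
          hm l (mem_insert_of_mem hl)
    refine ⟨y, ?_⟩
    rw [← Function.update_eq_self k m, hmk, f.map_update_add, f.map_update_smul,
      f.map_update_smul, f.map_update_self _ hks, smul_zero, zero_add, hy, smul_smul,
      card_insert_of_notMem hk, pow_succ']

theorem List.apply_prod_ofFn_of_leibniz {A : Type*} [Ring A] (T : A → A)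
    (hT : ∀ x y, T (x * y) = T x * y + x * T y) {m : ℕ} (f : Fin m → A) :
    T (List.ofFn f).prod = ∑ k, (List.ofFn (Function.update f k (T (f k)))).prod := by
  induction m with
  | zero =>
    have h1 : T 1 = 0 := by simpa using hT 1 1
    simp [h1]
  | succ m ih =>
    rw [List.ofFn_succ, List.prod_cons, hT, ih, Fin.sum_univ_succ, mul_sum]
    congr 1
    · simp [List.ofFn_succ]
    · refine sum_congr rfl fun k _ => ?_
      simp only [List.ofFn_succ, List.prod_cons, Function.update_of_ne (Fin.succ_ne_zero k).symm]
      congr 3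
      funext l
      by_cases hl : l = k <;> simp [hl]

theorem ExteriorAlgebra.apply_ιMulti_of_leibniz {R M : Type*} [CommRing R] [AddCommGroup M]
    [Module R M] (E : Module.End R (ExteriorAlgebra R M))
    (hE : ∀ x y, E (x * y) = E x * y + x * E y) (W : M → M) (hW : ∀ x, E (ι R x) = ι R (W x))
    {m : ℕ} (v : Fin m → M) :
    E (ιMulti R m v) = ∑ k, ιMulti R m (Function.update v k (W (v k))) := by
  rw [ιMulti_apply, List.apply_prod_ofFn_of_leibniz E hE]
  refine sum_congr rfl fun k _ => ?_
  rw [ιMulti_apply, hW]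
  congr 2
  funext l
  by_cases hl : l = k <;> simp [hl]

section
variable {A : Type*} [CommRing A] {n : ℕ} (z : A)

/-- `Sum.inl k` and `Sum.inr a` index `v_k` and `u_a`; `eVec z k` is `e(z) v_k`. -/
noncomputable def eVec (k : Fin n) : Fin n ⊕ Fin n → A :=
  Sum.elim 0 fun a => if k ≤ a then z ^ (n - 1 - a + k : ℕ) else 0

theorem eVec_eq_pow_smul_add {s k : Fin n} (hsk : s ≤ k) :
    ∃ r, eVec z k = z ^ (k - s : ℕ) • eVec z s + z ^ n • r := by
  refine ⟨Sum.elim 0 fun a => if s ≤ a ∧ a < k then -z ^ (k - 1 - a : ℕ) else 0, ?_⟩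
  have hsk' : (s : ℕ) ≤ k := hsk
  funext b
  rcases b with b | a
  · simp [eVec]
  · have ha := a.isLt
    simp only [eVec, Pi.add_apply, Pi.smul_apply, Sum.elim_inr, smul_eq_mul, mul_ite, mul_zero,
      mul_neg, Fin.le_def, Fin.lt_def]
    rcases le_or_gt (k : ℕ) a with hka | hak
    · rw [if_pos hka, if_pos (hsk'.trans hka), if_neg (by omega), add_zero, ← pow_add]
      congr 1
      omega
    · by_cases hsa : (s : ℕ) ≤ a
      · rw [if_neg (by omega), if_pos hsa, if_pos ⟨hsa, hak⟩, ← pow_add, ← pow_add,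
          ← sub_eq_add_neg, eq_comm, sub_eq_zero]
        congr 1
        omega
      · rw [if_neg (by omega), if_neg hsa, if_neg (by omega), add_zero]

noncomputable def eOp : (Fin n ⊕ Fin n → A) →ₗ[A] (Fin n ⊕ Fin n → A) :=
  ∑ k, (LinearMap.proj (Sum.inl k)).smulRight (eVec z k)

@[simp] theorem eOp_single_inl (k : Fin n) : eOp z (Pi.single (Sum.inl k) 1) = eVec z k := by
  simp [eOp, Pi.single_apply]

@[simp] theorem eOp_eVec (k : Fin n) : eOp z (eVec z k) = 0 := by
  simp [eOp, eVec]

theorem sum_pow_smul_shifted_single_eq_eVec (k : Fin n) :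
    (∑ j : Fin n, z ^ (n - 1 - j : ℕ) •
      if h : (k : ℕ) + j < n then (Pi.single (Sum.inr ⟨k + j, h⟩) 1 : Fin n ⊕ Fin n → A)
      else 0) = eVec z k := by
  funext b
  rcases b with b | a
  · simp [eVec, Finset.sum_apply, apply_dite (fun v : Fin n ⊕ Fin n → A => v (Sum.inl b))]
  · have hterm : ∀ j : Fin n,
        (if h : (k : ℕ) + j < n then (Pi.single (Sum.inr ⟨k + j, h⟩) 1 : Fin n ⊕ Fin n → A)
          else 0) (Sum.inr a) = if (a : ℕ) = k + j then 1 else 0 := by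
      intro j
      split_ifs with h h' h' <;> simp_all [Pi.single_apply, Fin.ext_iff]
      omega
    simp only [Finset.sum_apply, Pi.smul_apply, smul_eq_mul, hterm, mul_ite, mul_one, mul_zero,
      eVec, Sum.elim_inr]
    by_cases hka : k ≤ a
    · have hka' : (k : ℕ) ≤ a := hka
      rw [if_pos hka, sum_eq_single ⟨a - k, by omega⟩ (fun j _ hj => if_neg fun h =>
        hj (Fin.ext (by simp only; omega))) (by simp), if_pos (by simp only; omega)]
      congr 1
      simp only
      omega
    · rw [if_neg hka]
      exact sum_eq_zero fun j _ => if_neg fun h => hka (Fin.le_def.2 (by omega))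

theorem sum_pow_smul_comp_ι
    (D : Fin n → Module.End A (ExteriorAlgebra A (Fin n ⊕ Fin n → A)))
    (hv : ∀ (j i : Fin n),
      D j (ExteriorAlgebra.ι A (Pi.single (Sum.inl i) (1 : A))) =
        if h : (i : ℕ) + (j : ℕ) < n then
          ExteriorAlgebra.ι A (Pi.single (Sum.inr (⟨(i : ℕ) + (j : ℕ), h⟩ : Fin n)) (1 : A))
        else 0)
    (hu : ∀ (j i : Fin n), D j (ExteriorAlgebra.ι A (Pi.single (Sum.inr i) (1 : A))) = 0) :
    (∑ j : Fin n, z ^ (n - 1 - j : ℕ) • D j) ∘ₗ ExteriorAlgebra.ι A =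
      ExteriorAlgebra.ι A ∘ₗ eOp z := by
  refine (Pi.basisFun A _).ext fun b => ?_
  rcases b with k | a
  · simp only [Pi.basisFun_apply, LinearMap.comp_apply, LinearMap.sum_apply,
      LinearMap.smul_apply, hv, eOp_single_inl, ← sum_pow_smul_shifted_single_eq_eVec z k, map_sum,
      map_smul, apply_dite (ExteriorAlgebra.ι A), map_zero]
  · simp [hu, eOp]

noncomputable def eWedge (S : Finset (Fin n)) : ExteriorAlgebra A (Fin n ⊕ Fin n → A) :=
  ExteriorAlgebra.ιMulti A n fun k => if k ∈ S then eVec z k else Pi.single (Sum.inl k) 1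

theorem map_eWedge (E : Module.End A (ExteriorAlgebra A (Fin n ⊕ Fin n → A)))
    (hE : ∀ x y, E (x * y) = E x * y + x * E y)
    (hW : E ∘ₗ ExteriorAlgebra.ι A = ExteriorAlgebra.ι A ∘ₗ eOp z) (S : Finset (Fin n)) :
    E (eWedge z S) = ∑ k ∈ Sᶜ, eWedge z (insert k S) := by
  rw [eWedge, ExteriorAlgebra.apply_ιMulti_of_leibniz E hE (eOp z) (LinearMap.congr_fun hW),
    ← sum_compl_add_sum S, add_eq_left.2 (sum_eq_zero fun k hk => ?_)]
  · refine sum_congr rfl fun k hk => ?_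
    rw [eWedge]
    congr 1
    funext l
    by_cases hl : l = k <;> simp_all
  · simp [hk]

theorem pow_apply_eWedge_empty_mem_span
    (E : Module.End A (ExteriorAlgebra A (Fin n ⊕ Fin n → A)))
    (hE : ∀ x y, E (x * y) = E x * y + x * E y)
    (hW : E ∘ₗ ExteriorAlgebra.ι A = ExteriorAlgebra.ι A ∘ₗ eOp z) (i : ℕ) :
    (E ^ i) (eWedge z ∅) ∈ Submodule.span A (eWedge z '' {S | #S = i}) := by
  induction i with
  | zero => exact Submodule.subset_span ⟨∅, rfl, rfl⟩
  | succ i ih =>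
    have hmaps : Submodule.span A (eWedge z '' {S | #S = i}) ≤
        (Submodule.span A (eWedge z '' {S | #S = i + 1})).comap E := by
      refine Submodule.span_le.2 ?_
      rintro _ ⟨S, hS, rfl⟩
      rw [SetLike.mem_coe, Submodule.mem_comap, map_eWedge z E hE hW]
      refine Submodule.sum_mem _ fun k hk => Submodule.subset_span ⟨insert k S, ?_, rfl⟩
      show #(insert k S) = i + 1
      rw [card_insert_of_notMem (mem_compl.1 hk), hS]
    rw [pow_succ', Module.End.mul_apply]
    exact hmaps ih

theorem eWedge_eq_pow_smul {S : Finset (Fin n)} (hS : S.Nonempty) :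
    ∃ y, eWedge z S = z ^ (n * (#S - 1)) • y := by
  have hmin := S.min'_mem hS
  obtain ⟨y, hy⟩ := (ExteriorAlgebra.ιMulti A n).exists_eq_pow_card_smul_of_eq_smul_add_smul
    (z ^ n) (notMem_erase (S.min' hS) S)
    (m := fun k => if k ∈ S then eVec z k else Pi.single (Sum.inl k) 1) fun k hk => by
      obtain ⟨r, hr⟩ := eVec_eq_pow_smul_add z (S.min'_le k (mem_of_mem_erase hk))
      exact ⟨_, r, by simpa only [if_pos hmin, if_pos (mem_of_mem_erase hk)] using hr⟩
  exact ⟨y, by rw [eWedge, hy, ← pow_mul, card_erase_of_mem hmin]⟩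

end

open scoped Pointwise

/-- Let `V = ℂ² ⊗ (ℂ[t]/tⁿ)` with basis `v_0,...,v_{n-1},u_0,...,u_{n-1}` (realized over the
coefficient ring `ℂ[z]` as `(Fin n ⊕ Fin n) → ℂ[z]`), and let `e_j` be derivations of the
exterior algebra with `e_j v_i = u_{i+j}` (zero if `i+j ≥ n`) and `e_j u_i = 0`.  Set
`e⁽ⁿ⁾(z) = e_{n-1} + z e_{n-2} + ... + z^{n-1} e_0`.  Then for every `i`, the element
`e⁽ⁿ⁾(z)^i (v_0 ∧ ... ∧ v_{n-1})` is divisible by `z^{n(i-1)}`. -/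
theorem fusion_defining_relations (n : ℕ)
    (D : Fin n → Module.End (Polynomial ℂ)
      (ExteriorAlgebra (Polynomial ℂ) ((Fin n ⊕ Fin n) → Polynomial ℂ)))
    (hder : ∀ j x y, D j (x * y) = D j x * y + x * D j y)
    (hv : ∀ (j i : Fin n),
      D j (ExteriorAlgebra.ι (Polynomial ℂ)
          (Pi.single (Sum.inl i) (1 : Polynomial ℂ))) =
        if h : (i : ℕ) + (j : ℕ) < n then
          ExteriorAlgebra.ι (Polynomial ℂ)
            (Pi.single (Sum.inr (⟨(i : ℕ) + (j : ℕ), h⟩ : Fin n)) (1 : Polynomial ℂ))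
        else 0)
    (hu : ∀ (j i : Fin n),
      D j (ExteriorAlgebra.ι (Polynomial ℂ)
          (Pi.single (Sum.inr i) (1 : Polynomial ℂ))) = 0) :
    let Ez : Module.End (Polynomial ℂ)
        (ExteriorAlgebra (Polynomial ℂ) ((Fin n ⊕ Fin n) → Polynomial ℂ)) :=
      ∑ j : Fin n, (X : Polynomial ℂ) ^ (n - 1 - (j : ℕ)) • D j
    let base : ExteriorAlgebra (Polynomial ℂ) ((Fin n ⊕ Fin n) → Polynomial ℂ) :=
      (List.ofFn fun i : Fin n =>
        ExteriorAlgebra.ι (Polynomial ℂ) (Pi.single (Sum.inl i) (1 : Polynomial ℂ))).prod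
    ∀ i : ℕ, 1 ≤ i → ∃ y, (Ez ^ i) base = (X : Polynomial ℂ) ^ (n * (i - 1)) • y := by
  intro Ez base i hi
  have hE : ∀ x y, Ez (x * y) = Ez x * y + x * Ez y := fun x y => by
    simp only [Ez, LinearMap.sum_apply, LinearMap.smul_apply, hder, smul_add, sum_add_distrib,
      sum_mul, mul_sum, smul_mul_assoc, mul_smul_comm]
  have hbase : base = eWedge (X : ℂ[X]) ∅ := by
    simp [base, eWedge, ExteriorAlgebra.ιMulti_apply]
  have hspan := pow_apply_eWedge_empty_mem_span (X : ℂ[X]) Ez hE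
    (sum_pow_smul_comp_ι (X : ℂ[X]) D hv hu) i
  have hdvd : Submodule.span ℂ[X] (eWedge (X : ℂ[X]) '' {S : Finset (Fin n) | #S = i}) ≤
      (X : ℂ[X]) ^ (n * (i - 1)) • ⊤ := by
    refine Submodule.span_le.2 ?_
    rintro _ ⟨S, hS, rfl⟩
    obtain ⟨y, hy⟩ := eWedge_eq_pow_smul (X : ℂ[X]) (card_pos.1 (hS ▸ hi))
    rw [SetLike.mem_coe, hy, ← hS]
    exact Submodule.smul_mem_pointwise_smul _ _ _ Submodule.mem_top
  obtain ⟨y, -, hy⟩ := (Submodule.mem_smul_pointwise_iff_exists _ _ _).1 (hdvd (hbase ▸ hspan))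
  exact ⟨y, hy.symm⟩
end
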